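/- Team semantics coincides with single-world semantics on the powerset model: for every classical modal Kripke model M=(W,R,V), every nonempty team X⊆W and every MID⁻-formula φ, M,X⊨φ (team semantics) if and only if M°,X⊩φ (single-world satisfaction in the powerset model M° induced by M). -/

import Mathlib

/-- MID⁻-formulas (the dependence-atom-free fragment of modal intuitionistic
dependence logic): φ ::= p | ⊥ | φ∧φ | φ∨φ | φ→φ | □φ | ◇φ. -/
inductive MForm : Type where
  | var : ℕ → MForm
  | bot : MForm
  | and : MForm → MForm → MForm
  | or : MForm → MForm → MForm
  | impl : MForm → MForm → MForm
  | box : MForm → MForm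
  | dia : MForm → MForm

/-- A (classical modal) Kripke model M = (W,R,V) with W nonempty. -/
structure KModel where
  W : Type
  ne : Nonempty W
  R : W → W → Prop
  V : ℕ → Set W

/-- R(X) = {w : ∃ v ∈ X, vRw}. -/
def KModel.img (M : KModel) (X : Set M.W) : Set M.W := {w | ∃ v ∈ X, M.R v w}

/-- Y is a successor team of X: Y ⊆ R(X) and Y ∩ R(w) ≠ ∅ for every w ∈ X. -/
def KModel.succT (M : KModel) (X Y : Set M.W) : Prop :=
  Y ⊆ M.img X ∧ ∀ w ∈ X, ∃ u ∈ Y, M.R w u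

/-- Team semantics for MID⁻ formulas. -/
def KModel.tsat (M : KModel) : Set M.W → MForm → Prop
  | X, .var p => X ⊆ M.V p
  | X, .bot => X = ∅
  | X, .and φ ψ => M.tsat X φ ∧ M.tsat X ψ
  | X, .or φ ψ => M.tsat X φ ∨ M.tsat X ψ
  | X, .impl φ ψ => ∀ Y ⊆ X, M.tsat Y φ → M.tsat Y ψ
  | X, .box φ => M.tsat (M.img X) φ
  | X, .dia φ => ∃ Y, M.succT X Y ∧ M.tsat Y φ

/-- The data of a bi-relation intuitionistic Kripke model: a set of worlds, the
intuitionistic (accessibility) partial order ≥ (here `ge w v` reads "v is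
accessible from w along ≥"), a modal accessibility relation R, and a valuation. -/
structure IModel where
  W : Type
  ge : W → W → Prop
  R : W → W → Prop
  V : ℕ → Set W

/-- Single-world satisfaction ⊩ on a bi-relation intuitionistic Kripke model. -/
def IModel.isat (N : IModel) : N.W → MForm → Prop
  | w, .var p => w ∈ N.V p
  | _, .bot => False
  | w, .and φ ψ => N.isat w φ ∧ N.isat w ψ
  | w, .or φ ψ => N.isat w φ ∨ N.isat w ψ
  | w, .impl φ ψ => ∀ v, N.ge w v → N.isat v φ → N.isat v ψ
  | w, .box φ => ∀ u v, N.ge w u → N.R u v → N.isat v φ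
  | w, .dia φ => ∃ v, N.R w v ∧ N.isat v φ

/-- The powerset model M° induced by a Kripke model M: the worlds are the nonempty
teams of M, ordered by the superset relation, with the successor-team relation as
modal accessibility, and X ∈ V°(p) iff X ⊆ V(p). -/
def powModel (M : KModel) : IModel where
  W := {X : Set M.W // X.Nonempty}
  ge := fun X Y => Y.1 ⊆ X.1
  R := fun X Y => M.succT X.1 Y.1
  V := fun p => {X | X.1 ⊆ M.V p}

/-!
Induction on the formula. Propositional atoms, `∧`, `∨` and `◇` translate directly, since a
successor team of a nonempty team is nonempty. For `→` and `□` the team clauses quantify over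
all subteams, the empty one included, while `M°` only sees nonempty teams; this is harmless
because every formula holds on the empty team and team satisfaction is downward closed.
The one real point is `□`: `R(X)` is itself a successor team of the nonempty subteam of those
worlds of `X` that have an `R`-successor, so `□φ` in `M°` forces `φ` on `R(X)`.
-/

namespace KModel

variable (M : KModel)

theorem img_mono {X Y : Set M.W} (h : Y ⊆ X) : M.img Y ⊆ M.img X :=
  fun _ ⟨v, hv, hr⟩ => ⟨v, h hv, hr⟩

@[simp]
theorem img_empty : M.img ∅ = ∅ := by
  simp [img]

theorem nonempty_of_succT {X Y : Set M.W} (h : M.succT X Y) (hX : X.Nonempty) :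
    Y.Nonempty :=
  let ⟨w, hw⟩ := hX
  let ⟨u, hu, _⟩ := h.2 w hw
  ⟨u, hu⟩

theorem succT_img_of_hasSucc (X : Set M.W) : M.succT {w ∈ X | ∃ v, M.R w v} (M.img X) :=
  ⟨fun _ ⟨v, hv, hr⟩ => ⟨v, ⟨hv, _, hr⟩, hr⟩,
    fun _ ⟨hw, v, hr⟩ => ⟨v, ⟨_, hw, hr⟩, hr⟩⟩

theorem tsat_empty (φ : MForm) : M.tsat ∅ φ := by
  induction φ with
  | var p => exact Set.empty_subset _
  | bot => rfl
  | and φ ψ ihφ ihψ => exact ⟨ihφ, ihψ⟩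
  | or φ ψ ihφ _ => exact Or.inl ihφ
  | impl φ ψ _ ihψ =>
    intro Y hY _
    rwa [Set.subset_empty_iff.mp hY]
  | box φ ih => simpa only [tsat, img_empty] using ih
  | dia φ ih => exact ⟨∅, ⟨Set.empty_subset _, fun _ hw => hw.elim⟩, ih⟩

theorem tsat_anti {φ : MForm} {X Y : Set M.W} (h : M.tsat X φ) (hYX : Y ⊆ X) :
    M.tsat Y φ := by
  induction φ generalizing X Y with
  | var p => exact hYX.trans h
  | bot => exact Set.subset_empty_iff.mp (h ▸ hYX)
  | and φ ψ ihφ ihψ => exact ⟨ihφ h.1 hYX, ihψ h.2 hYX⟩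
  | or φ ψ ihφ ihψ => exact h.imp (ihφ · hYX) (ihψ · hYX)
  | impl φ ψ _ _ => exact fun Z hZ => h Z (hZ.trans hYX)
  | box φ ih => exact ih h (M.img_mono hYX)
  | dia φ ih =>
    obtain ⟨Z, ⟨-, hZ⟩, hZφ⟩ := h
    -- Shrink the witness to the part reachable from `Y`.
    refine ⟨Z ∩ M.img Y, ⟨Set.inter_subset_right, fun w hw => ?_⟩,
      ih hZφ Set.inter_subset_left⟩
    obtain ⟨u, hu, hr⟩ := hZ w (hYX hw)
    exact ⟨u, ⟨hu, w, hw, hr⟩, hr⟩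

theorem tsat_impl_iff {φ ψ : MForm} {X : Set M.W} :
    M.tsat X (.impl φ ψ) ↔ ∀ Y ⊆ X, Y.Nonempty → M.tsat Y φ → M.tsat Y ψ := by
  refine ⟨fun h Y hYX _ => h Y hYX, fun h Y hYX hφ => ?_⟩
  rcases Y.eq_empty_or_nonempty with rfl | hY
  · exact M.tsat_empty ψ
  · exact h Y hYX hY hφ

theorem tsat_box_iff {φ : MForm} {X : Set M.W} :
    M.tsat X (.box φ) ↔
      ∀ U ⊆ X, U.Nonempty → ∀ Y, M.succT U Y → M.tsat Y φ := by
  refine ⟨fun h U hUX _ Y hUY => M.tsat_anti h (hUY.1.trans (M.img_mono hUX)), fun h => ?_⟩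
  rcases (M.img X).eq_empty_or_nonempty with hImg | ⟨w, v, hv, hr⟩
  · show M.tsat (M.img X) φ
    exact hImg ▸ M.tsat_empty φ
  · exact h {w ∈ X | ∃ v, M.R w v} (fun _ hw => hw.1) ⟨v, hv, w, hr⟩ _
      (M.succT_img_of_hasSucc X)

end KModel

/-- STATEMENT 16: team semantics over M coincides with single-world semantics
over the powerset model M°, for every nonempty team and every MID⁻-formula. -/
theorem team_semantics_eq_powerset_semantics (M : KModel) (X : Set M.W)
    (hX : X.Nonempty) (φ : MForm) :
    M.tsat X φ ↔ (powModel M).isat ⟨X, hX⟩ φ := by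
  induction φ generalizing X with
  | var p => exact Iff.rfl
  | bot => exact iff_false_intro hX.ne_empty
  | and φ ψ ihφ ihψ => exact and_congr (ihφ X hX) (ihψ X hX)
  | or φ ψ ihφ ihψ => exact or_congr (ihφ X hX) (ihψ X hX)
  | impl φ ψ ihφ ihψ =>
    rw [M.tsat_impl_iff]
    exact ⟨fun h ⟨Y, hY⟩ hYX hφ => (ihψ Y hY).mp (h Y hYX hY ((ihφ Y hY).mpr hφ)),
      fun h Y hYX hY hφ => (ihψ Y hY).mpr (h ⟨Y, hY⟩ hYX ((ihφ Y hY).mp hφ))⟩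
  | box φ ih =>
    rw [M.tsat_box_iff]
    refine ⟨fun h ⟨U, hU⟩ ⟨Y, hY⟩ hUX hUY => (ih Y hY).mp (h U hUX hU Y hUY),
      fun h U hUX hU Y hUY => ?_⟩
    have hY := M.nonempty_of_succT hUY hU
    exact (ih Y hY).mpr (h ⟨U, hU⟩ ⟨Y, hY⟩ hUX hUY)
  | dia φ ih =>
    refine ⟨fun ⟨Y, hXY, hY⟩ => ?_, fun ⟨⟨Y, hY⟩, hXY, hφ⟩ => ⟨Y, hXY, (ih Y hY).mpr hφ⟩⟩
    have hYne := M.nonempty_of_succT hXY hX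
    exact ⟨⟨Y, hYne⟩, hXY, (ih Y hYne).mp hY⟩
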